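/- Let F be a field of characteristic 2, I an infinite index set with pairwise distinct distinguished elements i₀, i₁, k, V an F-vector space with basis (e_i)_{i∈I}, η_i ∈ V* the coordinate functionals with η_i(e_j) = δ_{ij}, V' = span{η_i : i ∈ I} ≤ V*, and V̄' = V ⊕ V' ≤ V ⊕ V*. Let f_q((a,α),(b,β)) = α(b) + β(a) be the polar form of q(a,α) = α(a), put u_i = (e_i, η_i) ∈ V̄' and U₀₁ = span{u_i + u_j : i, j ∈ I \ {i₀, i₁}}. Then {w ∈ V̄' : f_q(w,u) = 0 for all u ∈ U₀₁} = U₀₁ + span{(e_{i₀},0), (e_{i₁},0), (0,η_{i₀}), (0,η_{i₁}), u_k}. -/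

import Mathlib

/-- `V̄' = V ⊕ V'` inside `V ⊕ V*`, where `V'` is the span of the coordinate
functionals of the basis `b`. -/
def VbarSub {F I V : Type*} [Field F] [AddCommGroup V] [Module F V]
    (b : Module.Basis I F V) : Submodule F (V × Module.Dual F V) :=
  (⊤ : Submodule F V).prod (Submodule.span F (Set.range b.coord))

/-- `U₀₁ = span { u_i + u_j : i, j ∈ I \ {i₀, i₁} }`, where `u_i = (e_i, η_i)`. -/
def U01 {F I V : Type*} [Field F] [AddCommGroup V] [Module F V]
    (b : Module.Basis I F V) (i₀ i₁ : I) : Submodule F (V × Module.Dual F V) :=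
  Submodule.span F {w : V × Module.Dual F V |
    ∃ i j : I, i ≠ i₀ ∧ i ≠ i₁ ∧ j ≠ i₀ ∧ j ≠ i₁ ∧
      w = ((b i, b.coord i) : V × Module.Dual F V) + (b j, b.coord j)}
/-!
Write `w = (a, α) ∈ V̄'`. As `α` lies in the span of the `η_i`, it equals `b.toDual v` for some
`v ∈ V`, and then `f_q(u_i, w) = v_i + a_i`. Orthogonality to every `u_i + u_j` makes
`i ↦ v_i + a_i` constant off `{i₀, i₁}`; being finitely supported on an infinite index set, it
vanishes there. So `a - v ∈ span {e_{i₀}, e_{i₁}}` and `w = (v, b.toDual v) + (a - v, 0)`, where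
the graph of `b.toDual` is spanned by the `u_i`, and `u_i = (u_i + u_k) - u_k` for `i ∉ {i₀, i₁}`.
Conversely, `f_q(u_i, (v, b.toDual v)) = 2 v_i = 0`, and the other generators are orthogonal to
`u_i` for `i ∉ {i₀, i₁}` by inspection.
-/

open Module Submodule

lemma LinearMap.BilinForm.mem_orthogonal_span_iff {R M : Type*} [CommRing R] [AddCommGroup M]
    [Module R M] (B : LinearMap.BilinForm R M) (s : Set M) (m : M) :
    m ∈ B.orthogonal (span R s) ↔ ∀ x ∈ s, B x m = 0 := by
  refine ⟨fun h x hx => h x (subset_span hx), fun h => ?_⟩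
  suffices span R s ≤ LinearMap.ker (B.flip m) from fun x hx => this hx
  exact span_le.2 h

lemma Finsupp.apply_eq_zero_of_forall_add_eq_zero {ι M : Type*} [AddZeroClass M] [Infinite ι]
    (f : ι →₀ M) (T : Finset ι) (h : ∀ i ∉ T, ∀ j ∉ T, f i + f j = 0) {i : ι} (hi : i ∉ T) :
    f i = 0 := by
  classical
  obtain ⟨j, hj⟩ := Infinite.exists_notMem_finset (T ∪ f.support)
  rw [Finset.mem_union, not_or, Finsupp.mem_support_iff, not_not] at hj
  simpa [hj.2] using h i hi j hj.1

section

variable {F I V : Type*} [Field F] [AddCommGroup V] [Module F V]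

variable (F V) in
/-- The polar form `f_q`, with its arguments ordered so that `w ∈ (polar F V).orthogonal U`
unfolds to `∀ x ∈ U, w.2 x.1 + x.2 w.1 = 0`. -/
def polar : LinearMap.BilinForm F (V × Dual F V) :=
  LinearMap.mk₂ F (fun x w => w.2 x.1 + x.2 w.1)
    (fun _ _ _ => by simp only [Prod.fst_add, Prod.snd_add, map_add, LinearMap.add_apply]; ring)
    (fun _ _ _ => by
      simp only [Prod.smul_fst, Prod.smul_snd, map_smul, LinearMap.smul_apply, smul_eq_mul]; ring)
    (fun _ _ _ => by simp only [Prod.fst_add, Prod.snd_add, map_add, LinearMap.add_apply]; ring)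
    (fun _ _ _ => by
      simp only [Prod.smul_fst, Prod.smul_snd, map_smul, LinearMap.smul_apply, smul_eq_mul]; ring)

namespace Module.Basis

variable (b : Basis I F V)

lemma polar_apply_self_coord (i : I) (w : V × Dual F V) :
    polar F V (b i, b.coord i) w = w.2 (b i) + b.repr w.1 i := rfl

variable [DecidableEq I]

lemma toDual_self (i : I) : b.toDual (b i) = b.coord i :=
  b.ext fun j => by rw [toDual_apply_right, coord_apply]

lemma range_toDual : LinearMap.range b.toDual = span F (Set.range b.coord) := by
  rw [LinearMap.range_eq_map, ← b.span_eq, map_span, ← Set.range_comp]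
  simp only [Function.comp_def, toDual_self]

noncomputable def graphToDual : V →ₗ[F] V × Dual F V := LinearMap.id.prod b.toDual

@[simp]
lemma graphToDual_apply (v : V) : b.graphToDual v = (v, b.toDual v) := rfl

lemma graphToDual_self (i : I) : b.graphToDual (b i) = (b i, b.coord i) := by
  rw [graphToDual_apply, toDual_self]

lemma range_graphToDual_le_iff {R : Submodule F (V × Dual F V)} :
    LinearMap.range b.graphToDual ≤ R ↔ ∀ i, ((b i, b.coord i) : V × Dual F V) ∈ R := by
  rw [LinearMap.range_eq_map, ← b.span_eq, map_span, span_le, ← Set.range_comp,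
    Set.range_subset_iff]
  simp only [Function.comp_apply, graphToDual_self, SetLike.mem_coe]

end Module.Basis

variable (b : Basis I F V) {i₀ i₁ : I}

lemma vbarSub_eq [DecidableEq I] :
    VbarSub b = (⊤ : Submodule F V).prod (LinearMap.range b.toDual) := by
  rw [VbarSub, b.range_toDual]

lemma mem_orthogonal_U01_of_forall {w : V × Dual F V}
    (h : ∀ i, i ≠ i₀ → i ≠ i₁ → w.2 (b i) + b.repr w.1 i = 0) :
    w ∈ (polar F V).orthogonal (U01 b i₀ i₁) := by
  rw [U01, LinearMap.BilinForm.mem_orthogonal_span_iff]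
  rintro _ ⟨i, j, hi₀, hi₁, hj₀, hj₁, rfl⟩
  rw [map_add, LinearMap.add_apply, b.polar_apply_self_coord, b.polar_apply_self_coord,
    h i hi₀ hi₁, h j hj₀ hj₁, add_zero]

variable [DecidableEq I]

lemma range_graphToDual_le_vbarSub_inf [CharP F 2] :
    LinearMap.range b.graphToDual ≤ VbarSub b ⊓ (polar F V).orthogonal (U01 b i₀ i₁) := by
  rintro _ ⟨v, rfl⟩
  refine ⟨by simp [vbarSub_eq], mem_orthogonal_U01_of_forall b fun i _ _ => ?_⟩
  rw [b.graphToDual_apply, b.toDual_apply_left, CharTwo.add_self_eq_zero]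

lemma inl_mem_vbarSub_inf {p : I} (hp : p = i₀ ∨ p = i₁) :
    ((b p, 0) : V × Dual F V) ∈ VbarSub b ⊓ (polar F V).orthogonal (U01 b i₀ i₁) := by
  refine ⟨by simp [vbarSub_eq], mem_orthogonal_U01_of_forall b fun i hi₀ hi₁ => ?_⟩
  have : p ≠ i := by rintro rfl; tauto
  simp [this]

lemma inr_mem_vbarSub_inf {p : I} (hp : p = i₀ ∨ p = i₁) :
    ((0, b.coord p) : V × Dual F V) ∈ VbarSub b ⊓ (polar F V).orthogonal (U01 b i₀ i₁) := by
  refine ⟨by simp [vbarSub_eq, ← b.toDual_self],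
    mem_orthogonal_U01_of_forall b fun i hi₀ hi₁ => ?_⟩
  have : p ≠ i := by rintro rfl; tauto
  simp [this]

lemma U01_le_range_graphToDual : U01 b i₀ i₁ ≤ LinearMap.range b.graphToDual := by
  rw [U01, span_le]
  rintro _ ⟨i, j, -, -, -, -, rfl⟩
  exact ⟨b i + b j, by rw [map_add, b.graphToDual_self, b.graphToDual_self]⟩

lemma mem_range_graphToDual_sup_of_mem_orthogonal [CharP F 2] [Infinite I] {w : V × Dual F V}
    (hw : w ∈ VbarSub b) (ho : w ∈ (polar F V).orthogonal (U01 b i₀ i₁)) :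
    w ∈ LinearMap.range b.graphToDual ⊔
      (span F (b '' {i₀, i₁})).map (LinearMap.inl F V (Dual F V)) := by
  obtain ⟨v, hv⟩ := (mem_prod.1 (vbarSub_eq b ▸ hw)).2
  have hrepr : ∀ i ∉ ({i₀, i₁} : Finset I), b.repr (w.1 - v) i = 0 := by
    refine fun i => Finsupp.apply_eq_zero_of_forall_add_eq_zero _ _ fun p hp q hq => ?_
    simp only [Finset.mem_insert, Finset.mem_singleton, not_or] at hp hq
    have := ho _ (subset_span ⟨p, q, hp.1, hp.2, hq.1, hq.2, rfl⟩)
    rw [map_add, LinearMap.add_apply, b.polar_apply_self_coord, b.polar_apply_self_coord, ← hv,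
      b.toDual_apply_left, b.toDual_apply_left] at this
    rw [map_sub, Finsupp.sub_apply, Finsupp.sub_apply, CharTwo.sub_eq_add, CharTwo.sub_eq_add]
    linear_combination this
  have hspan : w.1 - v ∈ span F (b '' {i₀, i₁}) := by
    refine b.mem_span_image.2 fun i hi => ?_
    by_contra hi'
    exact Finsupp.mem_support_iff.1 hi (hrepr i (by simpa using hi'))
  have hw' : w = b.graphToDual v + LinearMap.inl F V (Dual F V) (w.1 - v) := by
    ext <;> simp [hv]
  rw [hw']
  exact add_mem_sup ⟨v, rfl⟩ (mem_map_of_mem hspan)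

lemma range_graphToDual_le_sup {k : I} (h₀k : i₀ ≠ k) (h₁k : i₁ ≠ k) :
    LinearMap.range b.graphToDual ≤ U01 b i₀ i₁ ⊔ span F
      {(b i₀, 0), (b i₁, 0), (0, b.coord i₀), (0, b.coord i₁), (b k, b.coord k)} := by
  refine b.range_graphToDual_le_iff.2 fun i => ?_
  have mem_right : ∀ x ∈ ({(b i₀, 0), (b i₁, 0), (0, b.coord i₀), (0, b.coord i₁),
      (b k, b.coord k)} : Set (V × Dual F V)), x ∈ U01 b i₀ i₁ ⊔ span F _ :=
    fun x hx => mem_sup_right (subset_span hx)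
  by_cases hi : i = i₀ ∨ i = i₁
  · have hsplit : ((b i, b.coord i) : V × Dual F V) = (b i, 0) + (0, b.coord i) := by simp
    rw [hsplit]
    rcases hi with rfl | rfl <;> exact add_mem (mem_right _ (by simp)) (mem_right _ (by simp))
  · rw [not_or] at hi
    have hik : ((b i, b.coord i) : V × Dual F V) + (b k, b.coord k) ∈ U01 b i₀ i₁ :=
      subset_span ⟨i, k, hi.1, hi.2, h₀k.symm, h₁k.symm, rfl⟩
    simpa using sub_mem (mem_sup_left hik) (mem_right (b k, b.coord k) (by simp))

end

theorem stmt_17_general {F : Type*} [Field F] [CharP F 2]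
    {I : Type*} [Infinite I]
    {V : Type*} [AddCommGroup V] [Module F V]
    (b : Module.Basis I F V) (i₀ i₁ k : I)
    (h0k : i₀ ≠ k) (h1k : i₁ ≠ k) :
    {w : V × Module.Dual F V | w ∈ VbarSub b ∧
        ∀ x ∈ U01 b i₀ i₁, w.2 x.1 + x.2 w.1 = 0} =
      ↑(U01 b i₀ i₁ ⊔ Submodule.span F
        ({(b i₀, (0 : Module.Dual F V)), (b i₁, 0),
          ((0 : V), b.coord i₀), (0, b.coord i₁),
          (b k, b.coord k)} : Set (V × Module.Dual F V))) := by
  classical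
  change ((VbarSub b ⊓ (polar F V).orthogonal (U01 b i₀ i₁) : Submodule F (V × Dual F V)) :
    Set (V × Dual F V)) = _
  congr 1
  apply le_antisymm
  · refine fun w hw => sup_le (range_graphToDual_le_sup b h0k h1k) ?_
      (mem_range_graphToDual_sup_of_mem_orthogonal b hw.1 hw.2)
    rw [map_span, span_le, Set.image_image]
    rintro _ ⟨i, rfl | rfl, rfl⟩ <;> exact mem_sup_right (subset_span (by simp))
  · refine sup_le ((U01_le_range_graphToDual b).trans (range_graphToDual_le_vbarSub_inf b))
      (span_le.2 ?_)
    rintro _ (rfl | rfl | rfl | rfl | rfl)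
    · exact inl_mem_vbarSub_inf b (.inl rfl)
    · exact inl_mem_vbarSub_inf b (.inr rfl)
    · exact inr_mem_vbarSub_inf b (.inl rfl)
    · exact inr_mem_vbarSub_inf b (.inr rfl)
    · exact range_graphToDual_le_vbarSub_inf b ⟨b k, b.graphToDual_self k⟩

/-- The perp of `U₀₁` inside `V̄'` with respect to the polar form
`f_q((a,α),(b,β)) = α(b) + β(a)` equals
`U₀₁ + ⟨(e_{i₀},0), (e_{i₁},0), (0,η_{i₀}), (0,η_{i₁}), u_k⟩`. -/
theorem stmt_17 {F : Type*} [Field F] [CharP F 2]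
    {I : Type*} [Infinite I]
    {V : Type*} [AddCommGroup V] [Module F V]
    (b : Module.Basis I F V) (i₀ i₁ k : I)
    (h01 : i₀ ≠ i₁) (h0k : i₀ ≠ k) (h1k : i₁ ≠ k) :
    {w : V × Module.Dual F V | w ∈ VbarSub b ∧
        ∀ x ∈ U01 b i₀ i₁, w.2 x.1 + x.2 w.1 = 0} =
      ↑(U01 b i₀ i₁ ⊔ Submodule.span F
        ({(b i₀, (0 : Module.Dual F V)), (b i₁, 0),
          ((0 : V), b.coord i₀), (0, b.coord i₁),
          (b k, b.coord k)} : Set (V × Module.Dual F V))) :=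
  stmt_17_general b i₀ i₁ k h0k h1k
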